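/- Let G be a finite Frobenius group with abelian kernel K and abelian complement L. Then the set of non-trivial conjugacy class sizes of G is exactly {|K|, |L|}. -/

import Mathlib

/-- The set of conjugacy class sizes of a group. -/
def csSet (G : Type*) [Group G] : Set ℕ :=
  {n | ∃ g : G, n = Nat.card {h : G // IsConj g h}}

/-- The set of non-central conjugacy class sizes of a group. -/
def csStar (G : Type*) [Group G] : Set ℕ := csSet G \ {1}

/-- The conjugate of a subgroup by a group element. -/
def conjSub {G : Type*} [Group G] (g : G) (H : Subgroup G) : Subgroup G :=
  H.map (MulAut.conj g).toMonoidHom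

/-!
Every `k ∈ K \ {1}` has centralizer exactly `K` (it lies in `K` by the Frobenius condition and
contains `K` since `K` is abelian), and every `l ∈ L \ {1}` has centralizer exactly `L`
(an element `c ∉ L` commuting with `l` would put `l` in `L^c ∩ L = 1`). Since `K` and `L` are
complements, the class of such `k` has size `|G : K| = |L|` and that of such `l` has size
`|G : L| = |K|`. Every other nontrivial element is conjugate into `L`, so no other class size
occurs, and both occur because `K` and `L` are nontrivial.
-/

open Subgroup

section

variable {G : Type*} [Group G]

theorem card_isConj_eq_index_centralizer (g : G) :
    Nat.card {h : G // IsConj g h} = (centralizer {g}).index := by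
  have hstab : (centralizer {g}).index = (MulAction.stabilizer (ConjAct G) g).index := by
    rw [ConjAct.stabilizer_eq_centralizer]; rfl
  rw [hstab, MulAction.index_stabilizer, ← Nat.card_coe_set_eq]
  exact Nat.card_congr (Equiv.subtypeEquivRight fun h => by
    rw [ConjAct.mem_orbit_conjAct, isConj_comm])

theorem card_isConj_one : Nat.card {h : G // IsConj 1 h} = 1 := by
  simp

theorem IsConj.card_isConj_eq {g g' : G} (hg : IsConj g g') :
    Nat.card {h : G // IsConj g h} = Nat.card {h : G // IsConj g' h} :=
  Nat.card_congr (Equiv.subtypeEquivRight fun _ => ⟨hg.symm.trans, hg.trans⟩)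

theorem card_isConj_eq_card_of_centralizer_eq {H H' : Subgroup G}
    (hHH' : IsComplement' H' H) {g : G} (hg : centralizer {g} = H) :
    Nat.card {h : G // IsConj g h} = Nat.card H' := by
  rw [card_isConj_eq_index_centralizer, hg, hHH'.index_eq_card]

theorem centralizer_singleton_eq_of_le {H : Subgroup G}
    (hH : ∀ x ∈ H, ∀ y ∈ H, x * y = y * x) {g : G} (hg : g ∈ H)
    (hle : centralizer {g} ≤ H) : centralizer {g} = H :=
  le_antisymm hle fun x hx => mem_centralizer_singleton_iff.mpr (hH x hx g hg)

theorem centralizer_singleton_le_of_conjSub_inf_eq_bot {L : Subgroup G}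
    (hL : ∀ g : G, g ∉ L → conjSub g L ⊓ L = ⊥) {l : G} (hl : l ∈ L) (hl1 : l ≠ 1) :
    centralizer {l} ≤ L := by
  intro c hc
  by_contra hcL
  have hlc : l ∈ conjSub c L := mem_map.mpr ⟨l, hl, by
    change c * l * c⁻¹ = l
    rw [mem_centralizer_singleton_iff.mp hc, mul_inv_cancel_right]⟩
  have hl_bot : l ∈ (⊥ : Subgroup G) := hL c hcL ▸ mem_inf.mpr ⟨hlc, hl⟩
  exact hl1 (mem_bot.mp hl_bot)

theorem exists_mem_isConj_of_notMem {K L : Subgroup G}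
    (hker : (K : Set G) = {1} ∪ (Set.univ \ ⋃ g : G, (conjSub g L : Set G))) {g : G}
    (hg : g ∉ K) : ∃ l ∈ L, IsConj l g := by
  have hgL : g ∈ ⋃ x : G, (conjSub x L : Set G) := by
    by_contra h
    have hgK : g ∈ (K : Set G) := hker ▸ Or.inr ⟨trivial, h⟩
    exact hg hgK
  obtain ⟨x, hx⟩ := Set.mem_iUnion.mp hgL
  obtain ⟨l, hl, hxl⟩ := mem_map.mp hx
  exact ⟨l, hl, isConj_iff.mpr ⟨x, hxl⟩⟩

end

/-- Let `G` be a finite Frobenius group with abelian kernel `K` and abelian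
complement `L`: `K` is normal, `G = K ⋊ L`, distinct conjugates of `L` meet
trivially, `C_G(k) ≤ K` for nontrivial `k ∈ K`, and `K = {1} ∪ (G \ ⋃_g L^g)`.
Then the set of non-trivial conjugacy class sizes of `G` is `{|K|, |L|}`. -/
theorem csStar_frobenius_abelian (G : Type*) [Group G] [Finite G]
    (K L : Subgroup G) (hKn : K.Normal)
    (hKab : ∀ x ∈ K, ∀ y ∈ K, x * y = y * x)
    (hLab : ∀ x ∈ L, ∀ y ∈ L, x * y = y * x)
    (hcompl : IsCompl K L) (hLbot : L ≠ ⊥) (hLtop : L ≠ ⊤)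
    (hfrob : ∀ g : G, g ∉ L → conjSub g L ⊓ L = ⊥)
    (hcent : ∀ k ∈ K, k ≠ 1 → Subgroup.centralizer {k} ≤ K)
    (hker : (K : Set G) = {1} ∪ (Set.univ \ ⋃ g : G, (conjSub g L : Set G))) :
    csStar G = {Nat.card K, Nat.card L} := by
  have hKL : IsComplement' K L :=
    isComplement'_of_disjoint_and_mul_eq_univ hcompl.disjoint <| by
      rw [← normal_mul, hcompl.sup_eq_top]; rfl
  have hsizeK : ∀ k ∈ K, k ≠ 1 → Nat.card {h : G // IsConj k h} = Nat.card L :=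
    fun k hk hk1 => card_isConj_eq_card_of_centralizer_eq hKL.symm
      (centralizer_singleton_eq_of_le hKab hk (hcent k hk hk1))
  have hsizeL : ∀ l ∈ L, l ≠ 1 → Nat.card {h : G // IsConj l h} = Nat.card K :=
    fun l hl hl1 => card_isConj_eq_card_of_centralizer_eq hKL
      (centralizer_singleton_eq_of_le hLab hl
        (centralizer_singleton_le_of_conjSub_inf_eq_bot hfrob hl hl1))
  have hKbot : K ≠ ⊥ := fun h => hLtop (by simpa [h] using hcompl.sup_eq_top)
  ext n
  constructor
  · rintro ⟨⟨g, rfl⟩, hn1⟩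
    have hg1 : g ≠ 1 := by rintro rfl; exact hn1 card_isConj_one
    by_cases hgK : g ∈ K
    · exact Or.inr (hsizeK g hgK hg1)
    · obtain ⟨l, hl, hlg⟩ := exists_mem_isConj_of_notMem hker hgK
      have hl1 : l ≠ 1 := by rintro rfl; exact hg1 (isConj_one_right.mp hlg)
      exact Or.inl (hlg.card_isConj_eq ▸ hsizeL l hl hl1)
  · rintro (rfl | rfl)
    · obtain ⟨l, hl, hl1⟩ := L.bot_or_exists_ne_one.resolve_left hLbot
      exact ⟨⟨l, (hsizeL l hl hl1).symm⟩, fun h => hKbot (card_eq_one.mp h)⟩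
    · obtain ⟨k, hk, hk1⟩ := K.bot_or_exists_ne_one.resolve_left hKbot
      exact ⟨⟨k, (hsizeK k hk hk1).symm⟩, fun h => hLbot (card_eq_one.mp h)⟩
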